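/- Every closed subset of a finite weakly nilpotent hypergroup H is strongly subnormal in H: there is a chain of closed subsets F = F₀ ⊆ F₁ ⊆ ⋯ ⊆ Fₙ = H with each Fᵢ₋₁ strongly normal in Fᵢ. -/

import Mathlib

/-- A hypergroup: a set with a hypermultiplication, identity and involution
satisfying (H1), (H2), (H3). -/
structure Hypergroup (H : Type*) where
  hmul : H → H → Set H
  one : H
  star : H → H
  assoc : ∀ p q r : H, (⋃ x ∈ hmul q r, hmul p x) = ⋃ x ∈ hmul p q, hmul x r
  hmul_one : ∀ s : H, hmul s one = {s}
  inv_left : ∀ p q r : H, r ∈ hmul p q → q ∈ hmul (star p) r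
  inv_right : ∀ p q r : H, r ∈ hmul p q → p ∈ hmul r (star q)

namespace Hypergroup

variable {H : Type*} (G : Hypergroup H)

/-- Complex (set) product: `AB = ⋃_{a ∈ A, b ∈ B} ab`. -/
def smul (A B : Set H) : Set H := ⋃ a ∈ A, ⋃ b ∈ B, G.hmul a b

/-- `A* = { a* | a ∈ A }`. -/
def sstar (A : Set H) : Set H := G.star '' A

/-- A nonempty subset `F` is closed if `F*F ⊆ F`. -/
def IsClosed (F : Set H) : Prop := F.Nonempty ∧ G.smul (G.sstar F) F ⊆ F

/-- `F` is normal in `K`: `Fk ⊆ kF` for all `k ∈ K`. -/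
def IsNormalIn (F K : Set H) : Prop := ∀ k ∈ K, G.smul F {k} ⊆ G.smul {k} F

/-- `F` is strongly normal in `K`: `k*Fk ⊆ F` for all `k ∈ K`. -/
def IsStronglyNormalIn (F K : Set H) : Prop :=
  ∀ k ∈ K, G.smul (G.smul {G.star k} F) {k} ⊆ F

/-- An element `s` is thin if `s*s = {1}`. -/
def IsThinElem (s : H) : Prop := G.hmul (G.star s) s = {G.one}

/-- A hypergroup is thin if all elements are thin. -/
def IsThin : Prop := ∀ s : H, G.IsThinElem s

/-- The center `Z(H) = {h | hx = xh for all x, h*h = {1}}`. -/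
def center : Set H :=
  {h | (∀ x : H, G.hmul h x = G.hmul x h) ∧ G.hmul (G.star h) h = {G.one}}

/-- The class `h^F := FhF`. -/
def cls (F : Set H) (h : H) : Set H := G.smul (G.smul F {h}) F

/-- The quotient set `H//F := { h^F | h ∈ H }`. -/
def quotSet (F : Set H) : Set (Set H) := Set.range (G.cls F)

/-- The class `h^F` as an element of `H//F`. -/
def qcls (F : Set H) (h : H) : G.quotSet F := ⟨G.cls F h, h, rfl⟩

/-- The full preimage in `H` of the center of the quotient `H//T`:
`{h | h^T ∈ Z(H//T)}`, i.e. `h^T` commutes with all classes `y^T` and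
`(h^T)*(h^T) = {1^T} = {T}`. -/
def qCenterPre (T : Set H) : Set H :=
  {h | (∀ y : H, G.cls T '' (G.smul (G.smul {h} T) {y}) =
          G.cls T '' (G.smul (G.smul {y} T) {h})) ∧
       G.cls T '' (G.smul (G.smul {G.star h} T) {h}) = {T}}

/-- The upper central series: `Z₀(H) = {1}`, and `Zᵢ₊₁(H)` is the full preimage
of `Z(H//Zᵢ(H))`, i.e. `Zᵢ₊₁(H)//Zᵢ(H) = Z(H//Zᵢ(H))`. -/
def upperCentral : ℕ → Set H
  | 0 => {G.one}
  | n + 1 => G.qCenterPre (upperCentral n)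

/-- A hypergroup is weakly nilpotent if `Zₙ(H) = H` for some `n`. -/
def WeaklyNilpotent : Prop := ∃ n : ℕ, G.upperCentral n = Set.univ

/-- `F` is subnormal in `K` via a chain of successively normal closed subsets. -/
def IsSubnormalIn (F K : Set H) : Prop :=
  ∃ n : ℕ, ∃ C : ℕ → Set H, C 0 = F ∧ C n = K ∧
    ∀ i < n, C i ⊆ C (i + 1) ∧ G.IsClosed (C (i + 1)) ∧ G.IsNormalIn (C i) (C (i + 1))

/-- The quotient `K//N` is thin: `(k^N)*(k^N) = {1^N}` for all `k ∈ K`. -/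
def QuotThin (N K : Set H) : Prop :=
  ∀ k ∈ K, G.cls N '' (G.smul (G.smul {G.star k} N) {k}) = {N}

/-- A residually-thin chain from `{1}` to `K`. -/
def RTChainOn (K : Set H) (n : ℕ) (C : ℕ → Set H) : Prop :=
  C 0 = {G.one} ∧ C n = K ∧
    ∀ i < n, C i ⊆ C (i + 1) ∧ G.IsClosed (C (i + 1)) ∧ G.QuotThin (C i) (C (i + 1))

/-- The valency `n_K = ∏ |Cᵢ₊₁//Cᵢ|` computed along some RT chain for `K`. -/
def HasValencyOn (K : Set H) (m : ℕ) : Prop :=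
  ∃ n C, G.RTChainOn K n C ∧
    m = ∏ i ∈ Finset.range n, Nat.card (G.cls (C i) '' C (i + 1))

/-- A closed `p`-subset: a closed subset whose valency is a power of `p`. -/
def PSubsetOn (p : ℕ) (K : Set H) : Prop :=
  G.IsClosed K ∧ ∃ m k : ℕ, G.HasValencyOn K m ∧ m = p ^ k

/-- `h` is `p`-valenced in `K`: for every subnormal closed `p`-subset `U` of `K`
such that `(h*)^U h^U` consists of thin elements of the quotient,
`n_{(h*)^U h^U} = |(h*)^U h^U|` is a power of `p`. -/
def PValencedElemOn (p : ℕ) (K : Set H) (h : H) : Prop :=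
  ∀ U : Set H, G.IsClosed U → U ⊆ K → G.IsSubnormalIn U K → G.PSubsetOn p U →
    (∀ x ∈ G.smul (G.smul {G.star h} U) {h},
      G.cls U '' (G.smul (G.smul {G.star x} U) {x}) = {U}) →
    ∃ k : ℕ, Nat.card (G.cls U '' (G.smul (G.smul {G.star h} U) {h})) = p ^ k

/-- `K` is `p`-valenced if all its elements are. -/
def PValencedOn (p : ℕ) (K : Set H) : Prop := ∀ h ∈ K, G.PValencedElemOn p K h

end Hypergroup

/-!
Write `Zᵢ` for the upper central series. For closed `T`, an element `z` whose class is central in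
`H//T` satisfies `z x ⊆ T x T z T` for every `x` (centrality) and `z* T z ⊆ T` (thinness). By
induction each `Zᵢ` is closed with `Zᵢ F ⊆ F Zᵢ`, so `F Zᵢ` is closed; and for `k ∈ f z` with
`f ∈ F`, `z ∈ Zᵢ₊₁` the two inclusions give `k* (F Zᵢ) k ⊆ z* F Zᵢ z ⊆ Zᵢ F Zᵢ (z* Zᵢ z) ⊆ F Zᵢ`.
So `F = F Z₀ ⊆ F Z₁ ⊆ ⋯ ⊆ F Zₙ = H` is a strongly subnormal chain.
-/

namespace Hypergroup

variable {H : Type*} {G : Hypergroup H}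

local infixr:70 " ∗ " => G.smul

section Products

lemma mem_smul {A B : Set H} {x : H} : x ∈ A ∗ B ↔ ∃ a ∈ A, ∃ b ∈ B, x ∈ G.hmul a b := by
  simp [smul]

lemma smul_mono {A A' B B' : Set H} (hA : A ⊆ A') (hB : B ⊆ B') : A ∗ B ⊆ A' ∗ B' :=
  Set.biUnion_mono hA fun _ _ => Set.biUnion_mono hB fun _ _ => subset_rfl

lemma singleton_smul_singleton (a b : H) : {a} ∗ {b} = G.hmul a b := by
  simp [smul]

lemma smul_assoc (A B C : Set H) : (A ∗ B) ∗ C = A ∗ B ∗ C := by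
  ext x
  simp only [mem_smul]
  constructor
  · rintro ⟨w, ⟨a, ha, b, hb, hw⟩, c, hc, hx⟩
    have : x ∈ ⋃ y ∈ G.hmul a b, G.hmul y c := Set.mem_biUnion hw hx
    rw [← G.assoc] at this
    obtain ⟨y, hy, hxy⟩ := Set.mem_iUnion₂.1 this
    exact ⟨a, ha, y, ⟨b, hb, c, hc, hy⟩, hxy⟩
  · rintro ⟨a, ha, w, ⟨b, hb, c, hc, hw⟩, hx⟩
    have : x ∈ ⋃ y ∈ G.hmul b c, G.hmul a y := Set.mem_biUnion hw hx
    rw [G.assoc] at this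
    obtain ⟨y, hy, hxy⟩ := Set.mem_iUnion₂.1 this
    exact ⟨y, ⟨a, ha, b, hb, hy⟩, c, hc, hxy⟩

lemma one_mem_star_hmul (s : H) : G.one ∈ G.hmul (G.star s) s :=
  G.inv_left _ _ _ (by simp [G.hmul_one])

lemma star_star (s : H) : G.star (G.star s) = s := by
  simpa [G.hmul_one, eq_comm] using G.inv_left _ _ _ (one_mem_star_hmul (G := G) s)

lemma star_one : G.star G.one = G.one := by
  simpa [G.hmul_one, eq_comm] using one_mem_star_hmul (G := G) G.one

lemma one_hmul (s : H) : G.hmul G.one s = {s} := by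
  ext r
  refine ⟨fun hr => ?_, fun hr => ?_⟩
  · have h := G.inv_left _ _ _ (G.inv_right _ _ _ hr)
    rw [G.hmul_one, Set.mem_singleton_iff] at h
    simpa [star_star] using congrArg G.star h.symm
  · rw [Set.mem_singleton_iff.1 hr]
    simpa only [star_star] using G.inv_right _ _ _ (one_mem_star_hmul (G := G) (G.star s))

lemma star_mem_hmul_star {p q r : H} (h : r ∈ G.hmul p q) :
    G.star r ∈ G.hmul (G.star q) (G.star p) :=
  G.inv_left _ _ _ (G.inv_right _ _ _ (G.inv_left _ _ _ h))

lemma one_smul (A : Set H) : {G.one} ∗ A = A := by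
  simp [smul, one_hmul]

lemma smul_one (A : Set H) : A ∗ {G.one} = A := by
  simp [smul, G.hmul_one]

lemma sstar_singleton (a : H) : G.sstar {a} = {G.star a} :=
  Set.image_singleton

lemma sstar_smul (A B : Set H) : G.sstar (A ∗ B) = G.sstar B ∗ G.sstar A := by
  ext x
  simp only [sstar, Set.mem_image, mem_smul]
  constructor
  · rintro ⟨y, ⟨a, ha, b, hb, hy⟩, rfl⟩
    exact ⟨_, ⟨b, hb, rfl⟩, _, ⟨a, ha, rfl⟩, star_mem_hmul_star hy⟩
  · rintro ⟨_, ⟨b, hb, rfl⟩, _, ⟨a, ha, rfl⟩, hx⟩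
    refine ⟨G.star x, ⟨a, ha, b, hb, ?_⟩, star_star x⟩
    simpa only [star_star] using star_mem_hmul_star hx

end Products

section Closed

variable {F : Set H} (hF : G.IsClosed F)
include hF

lemma one_mem : G.one ∈ F := by
  obtain ⟨f, hf⟩ := hF.1
  exact hF.2 (mem_smul.2 ⟨G.star f, ⟨f, hf, rfl⟩, f, hf, one_mem_star_hmul f⟩)

lemma star_mem {f : H} (hf : f ∈ F) : G.star f ∈ F :=
  hF.2 (mem_smul.2 ⟨G.star f, ⟨f, hf, rfl⟩, G.one, one_mem hF, by simp [G.hmul_one]⟩)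

lemma sstar_eq : G.sstar F = F :=
  (Set.image_subset_iff.2 fun _ => star_mem hF).antisymm
    fun f hf => ⟨G.star f, star_mem hF hf, star_star f⟩

lemma subset_smul_left (A : Set H) : A ⊆ F ∗ A :=
  fun a ha => mem_smul.2 ⟨G.one, one_mem hF, a, ha, by simp [one_hmul]⟩

lemma subset_smul_right (A : Set H) : A ⊆ A ∗ F :=
  fun a ha => mem_smul.2 ⟨a, ha, G.one, one_mem hF, by simp [G.hmul_one]⟩

lemma smul_self : F ∗ F = F := by
  refine Set.Subset.antisymm ?_ (subset_smul_left hF F)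
  simpa only [sstar_eq hF] using hF.2

lemma smul_smul_self (A : Set H) : F ∗ F ∗ A = F ∗ A := by
  rw [← smul_assoc, smul_self hF]

lemma smul_subset_of_subset {A B : Set H} (hA : A ⊆ F) (hB : B ⊆ F) : A ∗ B ⊆ F :=
  (smul_mono hA hB).trans (smul_self hF).le

lemma isClosed_smul {K : Set H} (hK : G.IsClosed K) (hKF : K ∗ F ⊆ F ∗ K) :
    G.IsClosed (F ∗ K) := by
  refine ⟨⟨G.one, subset_smul_right hK F (one_mem hF)⟩, ?_⟩
  rw [sstar_smul, sstar_eq hF, sstar_eq hK]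
  calc (K ∗ F) ∗ F ∗ K ⊆ (F ∗ K) ∗ F ∗ K := smul_mono hKF subset_rfl
    _ = F ∗ (K ∗ F) ∗ K := by simp only [smul_assoc]
    _ ⊆ F ∗ (F ∗ K) ∗ K := smul_mono subset_rfl (smul_mono hKF subset_rfl)
    _ = F ∗ K := by simp only [smul_assoc, smul_self hK, smul_smul_self hF]

end Closed

section Classes

variable {T : Set H}

lemma cls_eq (a : H) : G.cls T a = T ∗ {a} ∗ T :=
  smul_assoc _ _ _

lemma smul_smul_eq_sUnion_cls (S : Set H) : T ∗ S ∗ T = ⋃₀ (G.cls T '' S) := by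
  ext x
  simp only [Set.sUnion_image, Set.mem_iUnion, cls_eq, mem_smul, Set.mem_singleton_iff]
  aesop

variable (hT : G.IsClosed T)
include hT

lemma mem_cls_self (a : H) : a ∈ G.cls T a :=
  subset_smul_right hT _ (subset_smul_left hT {a} rfl)

lemma cls_one : G.cls T G.one = T := by
  rw [cls, smul_one, smul_self hT]

lemma mem_cls_comm {a b : H} (hab : a ∈ G.cls T b) : b ∈ G.cls T a := by
  obtain ⟨w, hw, t', ht', haw⟩ := mem_smul.1 hab
  obtain ⟨t, ht, _, rfl, hwb⟩ := mem_smul.1 hw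
  rw [cls_eq]
  exact mem_smul.2 ⟨G.star t, star_mem hT ht, w,
    mem_smul.2 ⟨a, rfl, G.star t', star_mem hT ht', G.inv_right _ _ _ haw⟩, G.inv_left _ _ _ hwb⟩

lemma cls_subset_of_mem {a b : H} (hab : a ∈ G.cls T b) : G.cls T a ⊆ G.cls T b := by
  calc G.cls T a = T ∗ {a} ∗ T := cls_eq a
    _ ⊆ T ∗ G.cls T b ∗ T := smul_mono subset_rfl (smul_mono (by simpa using hab) subset_rfl)
    _ = G.cls T b := by simp only [cls, smul_assoc, smul_smul_self hT, smul_self hT]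

lemma cls_eq_of_mem {a b : H} (hab : a ∈ G.cls T b) : G.cls T a = G.cls T b :=
  (cls_subset_of_mem hT hab).antisymm (cls_subset_of_mem hT (mem_cls_comm hT hab))

lemma cls_eq_self_of_mem {t : H} (ht : t ∈ T) : G.cls T t = T := by
  rw [cls_eq_of_mem hT ((cls_one hT).symm ▸ ht), cls_one hT]

lemma image_cls_eq_iff (S S' : Set H) :
    G.cls T '' S = G.cls T '' S' ↔ T ∗ S ∗ T = T ∗ S' ∗ T := by
  refine ⟨fun h => by rw [smul_smul_eq_sUnion_cls, smul_smul_eq_sUnion_cls, h], fun h => ?_⟩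
  have key : ∀ S₁ S₂ : Set H, T ∗ S₁ ∗ T = T ∗ S₂ ∗ T → G.cls T '' S₁ ⊆ G.cls T '' S₂ := by
    rintro S₁ S₂ hS _ ⟨a, ha, rfl⟩
    have : a ∈ ⋃₀ (G.cls T '' S₂) := by
      rw [← smul_smul_eq_sUnion_cls, ← hS, smul_smul_eq_sUnion_cls]
      exact ⟨_, ⟨a, ha, rfl⟩, mem_cls_self hT a⟩
    obtain ⟨_, ⟨b, hb, rfl⟩, hab⟩ := this
    exact ⟨b, hb, (cls_eq_of_mem hT hab).symm⟩
  exact (key _ _ h).antisymm (key _ _ h.symm)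

end Classes

-- `T a T b T`, the complex product of the classes `a^T` and `b^T`.
variable (G) in
def clsMul (T : Set H) (a b : H) : Set H := T ∗ {a} ∗ T ∗ {b} ∗ T

-- The preimage of `Z(H//T)` described inside `H`; it is `qCenterPre T` for closed `T`.
variable (G) in
def centerMod (T : Set H) : Set H :=
  {h | (∀ y, G.clsMul T h y = G.clsMul T y h) ∧ G.clsMul T (G.star h) h = T}

section CenterMod

variable {T : Set H}

lemma clsMul_eq_cls_smul (a b : H) : G.clsMul T a b = G.cls T a ∗ {b} ∗ T := by
  simp only [clsMul, cls, smul_assoc]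

lemma clsMul_eq_smul_cls (a b : H) : G.clsMul T a b = T ∗ {a} ∗ G.cls T b := by
  simp only [clsMul, cls, smul_assoc]

variable (hT : G.IsClosed T)
include hT

lemma qCenterPre_eq_centerMod : G.qCenterPre T = G.centerMod T := by
  have hT1 : ({T} : Set (Set H)) = G.cls T '' {G.one} := by
    rw [Set.image_singleton, cls_one hT]
  ext h
  simp only [qCenterPre, centerMod, Set.mem_ofPred_eq, hT1, image_cls_eq_iff hT, clsMul,
    smul_assoc, one_smul, smul_self hT]

lemma hmul_subset_clsMul (a b : H) : G.hmul a b ⊆ G.clsMul T a b := by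
  rw [← singleton_smul_singleton]
  exact (smul_mono subset_rfl ((subset_smul_right hT {b}).trans (subset_smul_left hT _))).trans
    (subset_smul_left hT _)

lemma sstar_clsMul (a b : H) : G.sstar (G.clsMul T a b) = G.clsMul T (G.star b) (G.star a) := by
  simp only [clsMul, sstar_smul, sstar_singleton, sstar_eq hT, smul_assoc]

lemma cls_eq_clsMul_of_mem_hmul {h g x : H} (hg : g ∈ G.centerMod T) (hx : x ∈ G.hmul h g) :
    G.cls T x = G.clsMul T h g := by
  apply Set.Subset.antisymm
  · calc G.cls T x = T ∗ {x} ∗ T := cls_eq x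
      _ ⊆ T ∗ G.hmul h g ∗ T := smul_mono subset_rfl (smul_mono (by simpa using hx) subset_rfl)
      _ = T ∗ {h} ∗ {g} ∗ T := by rw [← singleton_smul_singleton, smul_assoc]
      _ ⊆ G.clsMul T h g :=
          smul_mono subset_rfl (smul_mono subset_rfl (subset_smul_left hT _))
  · have hhx : h ∈ G.hmul x (G.star g) := G.inv_right _ _ _ hx
    calc G.clsMul T h g ⊆ T ∗ G.hmul x (G.star g) ∗ T ∗ {g} ∗ T :=
          smul_mono subset_rfl (smul_mono (by simpa using hhx) subset_rfl)
      _ = T ∗ {x} ∗ {G.star g} ∗ T ∗ {g} ∗ T := by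
          rw [← singleton_smul_singleton, smul_assoc]
      _ ⊆ T ∗ {x} ∗ G.clsMul T (G.star g) g :=
          smul_mono subset_rfl (smul_mono subset_rfl (subset_smul_left hT _))
      _ = G.cls T x := by rw [hg.2, cls_eq]

lemma subset_centerMod : T ⊆ G.centerMod T := by
  intro t ht
  refine ⟨fun y => ?_, ?_⟩
  · rw [clsMul_eq_cls_smul, clsMul_eq_smul_cls, cls_eq_self_of_mem hT ht]
  · rw [clsMul_eq_cls_smul, cls_eq_self_of_mem hT (star_mem hT ht), ← cls_eq,
      cls_eq_self_of_mem hT ht]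

lemma star_mem_centerMod {h : H} (hh : h ∈ G.centerMod T) : G.star h ∈ G.centerMod T := by
  have comm : ∀ y, G.clsMul T (G.star h) y = G.clsMul T y (G.star h) := fun y => by
    simpa only [sstar_clsMul hT, star_star] using (congrArg G.sstar (hh.1 (G.star y))).symm
  refine ⟨comm, ?_⟩
  rw [star_star, ← comm h]
  exact hh.2

lemma mem_centerMod_of_mem_hmul {h g x : H} (hh : h ∈ G.centerMod T) (hg : g ∈ G.centerMod T)
    (hx : x ∈ G.hmul h g) : x ∈ G.centerMod T := by
  have hcls : G.cls T x = G.clsMul T h g := cls_eq_clsMul_of_mem_hmul hT hg hx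
  have hcls' : G.cls T (G.star x) = G.clsMul T (G.star g) (G.star h) :=
    cls_eq_clsMul_of_mem_hmul hT (star_mem_centerMod hT hh) (star_mem_hmul_star hx)
  constructor
  · intro y
    calc G.clsMul T x y = G.clsMul T h g ∗ {y} ∗ T := by rw [clsMul_eq_cls_smul, hcls]
      _ = T ∗ {h} ∗ G.clsMul T g y := by simp only [clsMul, smul_assoc]
      _ = T ∗ {h} ∗ G.clsMul T y g := by rw [hg.1 y]
      _ = G.clsMul T h y ∗ {g} ∗ T := by simp only [clsMul, smul_assoc]
      _ = G.clsMul T y h ∗ {g} ∗ T := by rw [hh.1 y]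
      _ = T ∗ {y} ∗ G.clsMul T h g := by simp only [clsMul, smul_assoc]
      _ = G.clsMul T y x := by rw [clsMul_eq_smul_cls y x, hcls]
  · calc G.clsMul T (G.star x) x = G.clsMul T (G.star g) (G.star h) ∗ {x} ∗ T := by
          rw [clsMul_eq_cls_smul, hcls']
      _ = T ∗ {G.star g} ∗ T ∗ {G.star h} ∗ G.clsMul T h g := by
          rw [← hcls]; simp only [clsMul, cls, smul_assoc]
      _ = T ∗ {G.star g} ∗ G.clsMul T (G.star h) h ∗ {g} ∗ T := by
          simp only [clsMul, smul_assoc]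
      _ = T := by rw [hh.2]; exact hg.2

lemma isClosed_centerMod : G.IsClosed (G.centerMod T) := by
  refine ⟨⟨G.one, subset_centerMod hT (one_mem hT)⟩, fun x hx => ?_⟩
  obtain ⟨_, ⟨h, hh, rfl⟩, g, hg, hx⟩ := mem_smul.1 hx
  exact mem_centerMod_of_mem_hmul hT (star_mem_centerMod hT hh) hg hx

lemma singleton_smul_subset_of_mem_centerMod {z : H} (hz : z ∈ G.centerMod T) (X : Set H) :
    {z} ∗ X ⊆ T ∗ X ∗ T ∗ {z} ∗ T := by
  intro x hx
  obtain ⟨a, ha, y, hy, hxy⟩ := mem_smul.1 hx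
  rw [Set.mem_singleton_iff.1 ha] at hxy
  have : x ∈ G.clsMul T y z := hz.1 y ▸ hmul_subset_clsMul hT z y hxy
  exact smul_mono subset_rfl (smul_mono (Set.singleton_subset_iff.2 hy) subset_rfl) this

lemma star_smul_smul_subset_of_mem_centerMod {z : H} (hz : z ∈ G.centerMod T) :
    {G.star z} ∗ T ∗ {z} ⊆ T :=
  calc {G.star z} ∗ T ∗ {z} ⊆ G.clsMul T (G.star z) z :=
        (smul_mono subset_rfl (smul_mono subset_rfl (subset_smul_right hT _))).trans
          (subset_smul_left hT _)
    _ = T := hz.2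

lemma centerMod_smul_subset {F : Set H} (hTF : T ∗ F ⊆ F ∗ T) :
    G.centerMod T ∗ F ⊆ F ∗ G.centerMod T := by
  intro x hx
  obtain ⟨z, hz, f, hf, hxf⟩ := mem_smul.1 hx
  have hcls : T ∗ {z} ∗ T ⊆ G.centerMod T :=
    smul_subset_of_subset (isClosed_centerMod hT) (subset_centerMod hT)
      (smul_subset_of_subset (isClosed_centerMod hT) (by simpa using hz) (subset_centerMod hT))
  suffices {z} ∗ F ⊆ F ∗ G.centerMod T from this (mem_smul.2 ⟨z, rfl, f, hf, hxf⟩)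
  calc {z} ∗ F ⊆ (T ∗ F) ∗ T ∗ {z} ∗ T := by
        rw [smul_assoc]; exact singleton_smul_subset_of_mem_centerMod hT hz F
    _ ⊆ (F ∗ T) ∗ T ∗ {z} ∗ T := smul_mono hTF subset_rfl
    _ = F ∗ T ∗ {z} ∗ T := by rw [smul_assoc, smul_smul_self hT]
    _ ⊆ F ∗ G.centerMod T := smul_mono subset_rfl hcls

lemma isStronglyNormalIn_smul_centerMod {F : Set H} (hF : G.IsClosed F) (hTF : T ∗ F ⊆ F ∗ T) :
    G.IsStronglyNormalIn (F ∗ T) (F ∗ G.centerMod T) := by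
  intro k hk
  obtain ⟨f, hf, z, hz, hkfz⟩ := mem_smul.1 hk
  have hK : G.IsClosed (F ∗ T) := isClosed_smul hF hT hTF
  have hfK : {f} ⊆ F ∗ T := Set.singleton_subset_iff.2 (subset_smul_right hT F hf)
  have hconj : {G.star f} ∗ (F ∗ T) ∗ {f} ⊆ F ∗ T :=
    smul_subset_of_subset hK (Set.singleton_subset_iff.2 (star_mem hK (hfK rfl)))
      (smul_subset_of_subset hK subset_rfl hfK)
  rw [smul_assoc]
  calc {G.star k} ∗ (F ∗ T) ∗ {k}
      ⊆ G.hmul (G.star z) (G.star f) ∗ (F ∗ T) ∗ G.hmul f z :=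
        smul_mono (Set.singleton_subset_iff.2 (star_mem_hmul_star hkfz))
          (smul_mono subset_rfl (Set.singleton_subset_iff.2 hkfz))
    _ = {G.star z} ∗ ({G.star f} ∗ (F ∗ T) ∗ {f}) ∗ {z} := by
        rw [← singleton_smul_singleton, ← singleton_smul_singleton]
        simp only [smul_assoc]
    _ ⊆ {G.star z} ∗ (F ∗ T) ∗ {z} := smul_mono subset_rfl (smul_mono hconj subset_rfl)
    _ = ({G.star z} ∗ F) ∗ T ∗ {z} := by simp only [smul_assoc]
    _ ⊆ (T ∗ F ∗ T ∗ {G.star z} ∗ T) ∗ T ∗ {z} :=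
        smul_mono (singleton_smul_subset_of_mem_centerMod hT (star_mem_centerMod hT hz) F)
          subset_rfl
    _ = T ∗ F ∗ T ∗ ({G.star z} ∗ T ∗ {z}) := by simp only [smul_assoc, smul_smul_self hT]
    _ ⊆ T ∗ F ∗ T ∗ T :=
        smul_mono subset_rfl (smul_mono subset_rfl
          (smul_mono subset_rfl (star_smul_smul_subset_of_mem_centerMod hT hz)))
    _ = (T ∗ F) ∗ T := by rw [smul_self hT, smul_assoc]
    _ ⊆ (F ∗ T) ∗ T := smul_mono hTF subset_rfl
    _ = F ∗ T := by rw [smul_assoc, smul_self hT]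

end CenterMod

lemma isClosed_upperCentral : ∀ i, G.IsClosed (G.upperCentral i)
  | 0 => ⟨⟨G.one, rfl⟩, by
      simp [upperCentral, sstar_singleton, star_one, singleton_smul_singleton, one_hmul]⟩
  | i + 1 => by
      rw [upperCentral, qCenterPre_eq_centerMod (isClosed_upperCentral i)]
      exact isClosed_centerMod (isClosed_upperCentral i)

lemma upperCentral_succ (i : ℕ) :
    G.upperCentral (i + 1) = G.centerMod (G.upperCentral i) :=
  qCenterPre_eq_centerMod (isClosed_upperCentral i)

lemma upperCentral_smul_subset (F : Set H) :
    ∀ i, G.upperCentral i ∗ F ⊆ F ∗ G.upperCentral i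
  | 0 => by simp only [upperCentral, one_smul, smul_one, subset_rfl]
  | i + 1 => by
      rw [upperCentral_succ]
      exact centerMod_smul_subset (isClosed_upperCentral i) (upperCentral_smul_subset F i)

end Hypergroup

open Hypergroup

theorem closed_strongly_subnormal_general {H : Type*} (G : Hypergroup H)
    (hG : G.WeaklyNilpotent) (F : Set H) (hF : G.IsClosed F) :
    ∃ n : ℕ, ∃ C : ℕ → Set H, C 0 = F ∧ C n = Set.univ ∧
      ∀ i < n, C i ⊆ C (i + 1) ∧ G.IsClosed (C (i + 1)) ∧
        G.IsStronglyNormalIn (C i) (C (i + 1)) := by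
  obtain ⟨n, hn⟩ := hG
  refine ⟨n, fun i => G.smul F (G.upperCentral i), smul_one F, ?_, fun i _ => ⟨?_, ?_, ?_⟩⟩
  · dsimp only
    rw [hn]
    exact Set.eq_univ_of_forall fun x => subset_smul_left hF _ (Set.mem_univ x)
  · dsimp only
    rw [upperCentral_succ]
    exact smul_mono subset_rfl (subset_centerMod (isClosed_upperCentral i))
  · exact isClosed_smul hF (isClosed_upperCentral _) (upperCentral_smul_subset F _)
  · dsimp only
    rw [upperCentral_succ]
    exact isStronglyNormalIn_smul_centerMod (isClosed_upperCentral i) hF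
      (upperCentral_smul_subset F i)

/-- every closed subset of a finite weakly nilpotent hypergroup
is strongly subnormal: there is a chain `F = F₀ ⊆ ⋯ ⊆ Fₙ = H` of closed
subsets with each `Fᵢ` strongly normal in `Fᵢ₊₁`. -/
theorem closed_strongly_subnormal {H : Type*} [Finite H] (G : Hypergroup H)
    (hG : G.WeaklyNilpotent) (F : Set H) (hF : G.IsClosed F) :
    ∃ n : ℕ, ∃ C : ℕ → Set H, C 0 = F ∧ C n = Set.univ ∧
      ∀ i < n, C i ⊆ C (i + 1) ∧ G.IsClosed (C (i + 1)) ∧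
        G.IsStronglyNormalIn (C i) (C (i + 1)) :=
  closed_strongly_subnormal_general G hG F hF
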